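/- arXiv:2505.06229 — 2 statements merged into one kernel-verified Lean document; each statement's English description precedes it below -/
import Mathlib

section
/- Let x₀ < x₁ < ⋯ < x_N be a partition of [a,b] = [x₀, x_N], and for each i ∈ {1,…,N} let L_i : [a,b] → [x_{i-1}, x_i] be a homeomorphism with L_i(x₀) = x_{i-1} and L_i(x_N) = x_i. Let F_i : [a,b] × ℝ → ℝ be continuous and satisfy |F_i(x,y) - F_i(x,z)| ≤ |α_i| |y - z| for all x, y, z, where |α_i| ≤ κ < 1, together with F_i(x₀, y₀) = y_{i-1} and F_i(x_N, y_N) = y_i for given values y₀,…,y_N. Then the Read–Bajraktarević operator T, defined on X = {φ ∈ C[a,b] : φ(x₀) = y₀, φ(x_N) = y_N} by (Tφ)(x) = F_i(L_i⁻¹(x), φ(L_i⁻¹(x))) for x ∈ [x_{i-1}, x_i], is a well-defined contraction map on X with Lipschitz constant at most max_i |α_i| < 1. -/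
/-!
On each piece `[x_{i-1}, x_i]` the operator is the continuous function
`s ↦ F_i(L_i⁻¹ s, φ(L_i⁻¹ s))`. Two pieces meet only at a partition point `x_i`, where the
left piece sees `L_i⁻¹ x_i = b` and the right one `L_{i+1}⁻¹ x_i = a`; the join conditions
together with `φ(a) = y₀`, `φ(b) = y_N` make both values equal to `y_i`, so the pieces glue to
a continuous function on `[a, b]`. The contraction estimate is then pointwise: on the piece
containing `s` it is the Lipschitz bound of `F_i` in its second variable.
-/

open Set

section Partition

variable {X : Type*} [LinearOrder X]

theorem Icc_subset_iUnion_Icc_castSucc_succ (n : ℕ) (x : Fin (n + 2) → X) :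
    Icc (x 0) (x (Fin.last (n + 1))) ⊆ ⋃ i : Fin (n + 1), Icc (x i.castSucc) (x i.succ) := by
  induction n with
  | zero => exact fun s hs => mem_iUnion.2 ⟨0, hs⟩
  | succ n ih =>
    rw [iUnion_fin_add_one_eq_iUnion_castSucc]
    calc Icc (x 0) (x (Fin.last (n + 2)))
        ⊆ Icc (x 0) (x (Fin.last (n + 1)).castSucc) ∪
            Icc (x (Fin.last (n + 1)).castSucc) (x (Fin.last (n + 2))) :=
          Icc_subset_Icc_union_Icc
      _ ⊆ _ := union_subset_union (ih (x ∘ Fin.castSucc)) (by simp)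

theorem StrictMono.succ_eq_castSucc_of_mem_Icc {n : ℕ} {x : Fin (n + 1) → X} (hx : StrictMono x)
    {i j : Fin n} (hij : i < j) {s : X} (hi : s ∈ Icc (x i.castSucc) (x i.succ))
    (hj : s ∈ Icc (x j.castSucc) (x j.succ)) : i.succ = j.castSucc ∧ s = x i.succ := by
  have hle : x i.succ ≤ x j.castSucc := hx.monotone (Fin.succ_le_castSucc_iff.2 hij)
  have hs : s = x i.succ := le_antisymm hi.2 (hle.trans hj.1)
  exact ⟨hx.injective (le_antisymm hle (hs ▸ hj.1)), hs⟩

end Partition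

section Glue

variable {ι α β : Type*} [Zero β]

open Classical in
/-- Junk value `0` off `⋃ i, S i`; where the `g i` disagree on an overlap, an arbitrary one wins. -/
noncomputable def iUnionGlue (S : ι → Set α) (g : ι → α → β) (s : α) : β :=
  if h : ∃ i, s ∈ S i then g h.choose s else 0

variable {S : ι → Set α} {g : ι → α → β}

theorem iUnionGlue_eq_of_mem (hg : ∀ i j, EqOn (g i) (g j) (S i ∩ S j)) {i : ι} {s : α}
    (hs : s ∈ S i) : iUnionGlue S g s = g i s := by
  have h : ∃ i, s ∈ S i := ⟨i, hs⟩
  rw [iUnionGlue, dif_pos h]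
  exact hg _ _ ⟨h.choose_spec, hs⟩

theorem continuousOn_iUnionGlue [Finite ι] [TopologicalSpace α] [TopologicalSpace β]
    (hS : ∀ i, IsClosed (S i)) (hg : ∀ i j, EqOn (g i) (g j) (S i ∩ S j))
    (hcont : ∀ i, ContinuousOn (g i) (S i)) : ContinuousOn (iUnionGlue S g) (⋃ i, S i) :=
  LocallyFinite.continuousOn_iUnion (locallyFinite_of_finite S) hS fun i =>
    (hcont i).congr fun _ hs => iUnionGlue_eq_of_mem hg hs

end Glue

section ReadBajraktarevic

variable {N : ℕ} (x : Fin (N + 2) → ℝ) (Linv : Fin (N + 1) → ℝ → ℝ)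
  (F : Fin (N + 1) → ℝ → ℝ → ℝ)

noncomputable def readBajraktarevic (φ : ℝ → ℝ) : ℝ → ℝ :=
  iUnionGlue (fun i => Icc (x i.castSucc) (x i.succ)) fun i s => F i (Linv i s) (φ (Linv i s))

variable {x Linv F} {a b : ℝ} {y : Fin (N + 2) → ℝ} {φ : ℝ → ℝ}
  (hx : StrictMono x)
  (hLinva : ∀ i, Linv i (x i.castSucc) = a) (hLinvb : ∀ i, Linv i (x i.succ) = b)
  (hFa : ∀ i, F i a (y 0) = y i.castSucc) (hFb : ∀ i, F i b (y (Fin.last (N + 1))) = y i.succ)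
  (hφa : φ a = y 0) (hφb : φ b = y (Fin.last (N + 1)))
include hx hLinva hLinvb hFa hFb hφa hφb

theorem readBajraktarevic_pieces_agree (i j : Fin (N + 1)) :
    EqOn (fun s => F i (Linv i s) (φ (Linv i s))) (fun s => F j (Linv j s) (φ (Linv j s)))
      (Icc (x i.castSucc) (x i.succ) ∩ Icc (x j.castSucc) (x j.succ)) := by
  have agree_of_lt : ∀ i j : Fin (N + 1), i < j → ∀ s ∈ Icc (x i.castSucc) (x i.succ),
      s ∈ Icc (x j.castSucc) (x j.succ) → F i (Linv i s) (φ (Linv i s)) =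
        F j (Linv j s) (φ (Linv j s)) := by
    intro i j hij s hi hj
    obtain ⟨hsucc, rfl⟩ := hx.succ_eq_castSucc_of_mem_Icc hij hi hj
    rw [hLinvb, hsucc, hLinva, hφa, hφb, hFa, hFb, hsucc]
  intro s ⟨hi, hj⟩
  rcases lt_trichotomy i j with hij | rfl | hji
  · exact agree_of_lt i j hij s hi hj
  · rfl
  · exact (agree_of_lt j i hji s hj hi).symm

theorem readBajraktarevic_eq {i : Fin (N + 1)} {s : ℝ}
    (hs : s ∈ Icc (x i.castSucc) (x i.succ)) :
    readBajraktarevic x Linv F φ s = F i (Linv i s) (φ (Linv i s)) :=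
  iUnionGlue_eq_of_mem (readBajraktarevic_pieces_agree hx hLinva hLinvb hFa hFb hφa hφb) hs

theorem readBajraktarevic_apply_zero : readBajraktarevic x Linv F φ (x 0) = y 0 := by
  have hs : x (Fin.castSucc 0) ∈ Icc (x (Fin.castSucc 0)) (x (0 : Fin (N + 1)).succ) :=
    left_mem_Icc.2 (hx.monotone Fin.castSucc_lt_succ.le)
  rw [← Fin.castSucc_zero, readBajraktarevic_eq hx hLinva hLinvb hFa hFb hφa hφb hs, hLinva, hφa,
    hFa]

theorem readBajraktarevic_apply_last :
    readBajraktarevic x Linv F φ (x (Fin.last (N + 1))) = y (Fin.last (N + 1)) := by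
  have hs : x (Fin.last N).succ ∈ Icc (x (Fin.last N).castSucc) (x (Fin.last N).succ) :=
    right_mem_Icc.2 (hx.monotone Fin.castSucc_lt_succ.le)
  rw [← Fin.succ_last, readBajraktarevic_eq hx hLinva hLinvb hFa hFb hφa hφb hs, hLinvb, hφb,
    hFb]

theorem continuousOn_readBajraktarevic (hφ : ContinuousOn φ (Icc a b))
    (hLinvcont : ∀ i, ContinuousOn (Linv i) (Icc (x i.castSucc) (x i.succ)))
    (hLinvmaps : ∀ i, MapsTo (Linv i) (Icc (x i.castSucc) (x i.succ)) (Icc a b))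
    (hFcont : ∀ i, ContinuousOn (fun p : ℝ × ℝ => F i p.1 p.2) (Icc a b ×ˢ univ)) :
    ContinuousOn (readBajraktarevic x Linv F φ) (Icc (x 0) (x (Fin.last (N + 1)))) :=
  (continuousOn_iUnionGlue (fun _ => isClosed_Icc)
      (readBajraktarevic_pieces_agree hx hLinva hLinvb hFa hFb hφa hφb) fun i =>
      (hFcont i).comp ((hLinvcont i).prodMk (hφ.comp (hLinvcont i) (hLinvmaps i)))
        fun _ hs => ⟨hLinvmaps i hs, trivial⟩).mono
    (Icc_subset_iUnion_Icc_castSucc_succ N x)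

end ReadBajraktarevic

theorem stmt_4_general (a b : ℝ) (hab : a < b) (N : ℕ)
    (x : Fin (N + 2) → ℝ) (hxmono : StrictMono x)
    (hx0 : x 0 = a) (hxN : x (Fin.last (N + 1)) = b)
    (y : Fin (N + 2) → ℝ)
    (L : Fin (N + 1) → ℝ → ℝ) (Linv : Fin (N + 1) → ℝ → ℝ)
    (hLa : ∀ i, L i a = x i.castSucc) (hLb : ∀ i, L i b = x i.succ)
    (hLinvcont : ∀ i, ContinuousOn (Linv i) (Set.Icc (x i.castSucc) (x i.succ)))
    (hLinvmaps : ∀ i, Set.MapsTo (Linv i) (Set.Icc (x i.castSucc) (x i.succ)) (Set.Icc a b))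
    (hLinvL : ∀ i, ∀ t ∈ Set.Icc a b, Linv i (L i t) = t)
    (F : Fin (N + 1) → ℝ → ℝ → ℝ)
    (hFcont : ∀ i, ContinuousOn (fun p : ℝ × ℝ => F i p.1 p.2)
      (Set.Icc a b ×ˢ (Set.univ : Set ℝ)))
    (α : Fin (N + 1) → ℝ) (κ : ℝ) (hα : ∀ i, |α i| ≤ κ)
    (hFlip : ∀ i (u v w : ℝ), |F i u v - F i u w| ≤ |α i| * |v - w|)
    (hFa : ∀ i, F i a (y 0) = y i.castSucc)
    (hFb : ∀ i, F i b (y (Fin.last (N + 1))) = y i.succ) :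
    ∃ T : (ℝ → ℝ) → (ℝ → ℝ),
      (∀ φ : ℝ → ℝ,
        (ContinuousOn φ (Set.Icc a b) ∧ φ a = y 0 ∧ φ b = y (Fin.last (N + 1))) →
        ((ContinuousOn (T φ) (Set.Icc a b) ∧ T φ a = y 0 ∧ T φ b = y (Fin.last (N + 1))) ∧
          ∀ i : Fin (N + 1), ∀ s ∈ Set.Icc (x i.castSucc) (x i.succ),
            T φ s = F i (Linv i s) (φ (Linv i s)))) ∧
      (∀ φ ψ : ℝ → ℝ,
        (ContinuousOn φ (Set.Icc a b) ∧ φ a = y 0 ∧ φ b = y (Fin.last (N + 1))) →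
        (ContinuousOn ψ (Set.Icc a b) ∧ ψ a = y 0 ∧ ψ b = y (Fin.last (N + 1))) →
        ∀ C : ℝ, (∀ t ∈ Set.Icc a b, |φ t - ψ t| ≤ C) →
          ∀ s ∈ Set.Icc a b, |T φ s - T ψ s| ≤ κ * C) := by
  have hLinva : ∀ i, Linv i (x i.castSucc) = a := fun i => by
    rw [← hLa i, hLinvL i a (left_mem_Icc.2 hab.le)]
  have hLinvb : ∀ i, Linv i (x i.succ) = b := fun i => by
    rw [← hLb i, hLinvL i b (right_mem_Icc.2 hab.le)]
  subst hx0 hxN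
  refine ⟨readBajraktarevic x Linv F, fun φ ⟨hφc, hφa, hφb⟩ => ⟨⟨?_, ?_, ?_⟩, ?_⟩,
    fun φ ψ ⟨_, hφa, hφb⟩ ⟨_, hψa, hψb⟩ C hC s hs => ?_⟩
  · exact continuousOn_readBajraktarevic hxmono hLinva hLinvb hFa hFb hφa hφb hφc hLinvcont
      hLinvmaps hFcont
  · exact readBajraktarevic_apply_zero hxmono hLinva hLinvb hFa hFb hφa hφb
  · exact readBajraktarevic_apply_last hxmono hLinva hLinvb hFa hFb hφa hφb
  · exact fun i s hs => readBajraktarevic_eq hxmono hLinva hLinvb hFa hFb hφa hφb hs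
  obtain ⟨i, hi⟩ := mem_iUnion.1 (Icc_subset_iUnion_Icc_castSucc_succ N x hs)
  rw [readBajraktarevic_eq hxmono hLinva hLinvb hFa hFb hφa hφb hi,
    readBajraktarevic_eq hxmono hLinva hLinvb hFa hFb hψa hψb hi]
  calc |F i (Linv i s) (φ (Linv i s)) - F i (Linv i s) (ψ (Linv i s))|
      ≤ |α i| * |φ (Linv i s) - ψ (Linv i s)| := hFlip i _ _ _
    _ ≤ κ * C := mul_le_mul (hα i) (hC _ (hLinvmaps i hi)) (abs_nonneg _)
        ((abs_nonneg (α i)).trans (hα i))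

/-- The Read–Bajraktarević operator is a well-defined contraction on
`X = {φ ∈ C[a,b] : φ(x₀) = y₀, φ(x_N) = y_N}` (here the partition has `N+1` subintervals,
indexed by `i : Fin (N+1)`, with points `x : Fin (N+2) → ℝ`). -/
theorem stmt_4 (a b : ℝ) (hab : a < b) (N : ℕ)
    (x : Fin (N + 2) → ℝ) (hxmono : StrictMono x)
    (hx0 : x 0 = a) (hxN : x (Fin.last (N + 1)) = b)
    (y : Fin (N + 2) → ℝ)
    (L : Fin (N + 1) → ℝ → ℝ) (Linv : Fin (N + 1) → ℝ → ℝ)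
    (hLcont : ∀ i, ContinuousOn (L i) (Set.Icc a b))
    (hLmaps : ∀ i, Set.MapsTo (L i) (Set.Icc a b) (Set.Icc (x i.castSucc) (x i.succ)))
    (hLa : ∀ i, L i a = x i.castSucc) (hLb : ∀ i, L i b = x i.succ)
    (hLinvcont : ∀ i, ContinuousOn (Linv i) (Set.Icc (x i.castSucc) (x i.succ)))
    (hLinvmaps : ∀ i, Set.MapsTo (Linv i) (Set.Icc (x i.castSucc) (x i.succ)) (Set.Icc a b))
    (hLinvL : ∀ i, ∀ t ∈ Set.Icc a b, Linv i (L i t) = t)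
    (hLLinv : ∀ i, ∀ s ∈ Set.Icc (x i.castSucc) (x i.succ), L i (Linv i s) = s)
    (F : Fin (N + 1) → ℝ → ℝ → ℝ)
    (hFcont : ∀ i, ContinuousOn (fun p : ℝ × ℝ => F i p.1 p.2)
      (Set.Icc a b ×ˢ (Set.univ : Set ℝ)))
    (α : Fin (N + 1) → ℝ) (κ : ℝ) (hκ : κ < 1) (hα : ∀ i, |α i| ≤ κ)
    (hFlip : ∀ i (u v w : ℝ), |F i u v - F i u w| ≤ |α i| * |v - w|)
    (hFa : ∀ i, F i a (y 0) = y i.castSucc)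
    (hFb : ∀ i, F i b (y (Fin.last (N + 1))) = y i.succ) :
    ∃ T : (ℝ → ℝ) → (ℝ → ℝ),
      (∀ φ : ℝ → ℝ,
        (ContinuousOn φ (Set.Icc a b) ∧ φ a = y 0 ∧ φ b = y (Fin.last (N + 1))) →
        ((ContinuousOn (T φ) (Set.Icc a b) ∧ T φ a = y 0 ∧ T φ b = y (Fin.last (N + 1))) ∧
          ∀ i : Fin (N + 1), ∀ s ∈ Set.Icc (x i.castSucc) (x i.succ),
            T φ s = F i (Linv i s) (φ (Linv i s)))) ∧
      (∀ φ ψ : ℝ → ℝ,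
        (ContinuousOn φ (Set.Icc a b) ∧ φ a = y 0 ∧ φ b = y (Fin.last (N + 1))) →
        (ContinuousOn ψ (Set.Icc a b) ∧ ψ a = y 0 ∧ ψ b = y (Fin.last (N + 1))) →
        ∀ C : ℝ, (∀ t ∈ Set.Icc a b, |φ t - ψ t| ≤ C) →
          ∀ s ∈ Set.Icc a b, |T φ s - T ψ s| ≤ κ * C) :=
  stmt_4_general a b hab N x hxmono hx0 hxN y L Linv hLa hLb hLinvcont hLinvmaps hLinvL F hFcont α κ
    hα hFlip hFa hFb
end

section
/- With the neural network operator S_{n,σ} as above and f : [a,b] → ℝ continuous, the approximation error satisfies ‖f - S_{n,σ}(f, ·)‖∞ ≤ ω(f, h), where h = (b-a)/n and ω(f, δ) = sup{|f(x) - f(y)| : x, y ∈ [a,b], |x - y| ≤ δ} is the modulus of continuity of f. -/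
/-!
On a cell `[a + k h, a + (k + 1) h]` of the grid only the neurons at its two endpoints are active,
since the rescaled bump vanishes at distance `≥ h` from its centre, and their weights add up to
`1` because the two differences of `σ` telescope. So `S_{n,σ}(f, x)` is a convex combination of
`f (a + k h)` and `f (a + (k + 1) h)`, each within `ω(f, h)` of `f x`.
-/

open Set Finset

/-- Modulus of continuity of `f` on `[a,b]` with parameter `δ`. -/
noncomputable def modulus (f : ℝ → ℝ) (a b δ : ℝ) : ℝ :=
  sSup {d : ℝ | ∃ u ∈ Set.Icc a b, ∃ v ∈ Set.Icc a b, |u - v| ≤ δ ∧ d = |f u - f v|}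

lemma abs_sub_le_modulus {f : ℝ → ℝ} {a b δ u v : ℝ} (hf : ContinuousOn f (Icc a b))
    (hu : u ∈ Icc a b) (hv : v ∈ Icc a b) (huv : |u - v| ≤ δ) :
    |f u - f v| ≤ modulus f a b δ := by
  obtain ⟨C, hC⟩ := isCompact_Icc.exists_bound_of_continuousOn hf
  refine le_csSup ⟨2 * C, ?_⟩ ⟨u, hu, v, hv, huv, rfl⟩
  rintro d ⟨p, hp, q, hq, -, rfl⟩
  simp only [Real.norm_eq_abs] at hC
  linarith [abs_sub (f p) (f q), hC p hp, hC q hq]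

lemma abs_sub_add_mul_le {y u v w₁ w₂ M : ℝ} (hw₁ : 0 ≤ w₁) (hw₂ : 0 ≤ w₂)
    (hw : w₁ + w₂ = 1) (hu : |y - u| ≤ M) (hv : |y - v| ≤ M) :
    |y - (u * w₁ + v * w₂)| ≤ M :=
  calc |y - (u * w₁ + v * w₂)| = |w₁ * (y - u) + w₂ * (y - v)| := by
        congr 1; linear_combination (-y) * hw
    _ ≤ w₁ * |y - u| + w₂ * |y - v| := by
        exact (abs_add_le _ _).trans_eq
          (by rw [abs_mul, abs_mul, abs_of_nonneg hw₁, abs_of_nonneg hw₂])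
    _ ≤ w₁ * M + w₂ * M := by gcongr
    _ = M := by rw [← add_mul, hw, one_mul]

def bump (σ : ℝ → ℝ) (m x : ℝ) : ℝ := σ (x + m) - σ (x - m)

section bump

variable {σ : ℝ → ℝ} {m : ℝ}

lemma bump_nonneg (hσ : Monotone σ) (hm : 0 ≤ m) (x : ℝ) : 0 ≤ bump σ m x :=
  sub_nonneg.2 (hσ (by linarith))

lemma bump_eq_zero_of_two_mul_le_abs (hm : 0 ≤ m) (hσ1 : ∀ x, m ≤ x → σ x = 1)
    (hσ0 : ∀ x, x ≤ -m → σ x = 0) {x : ℝ} (hx : 2 * m ≤ |x|) : bump σ m x = 0 := by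
  rcases le_abs'.1 hx with hx | hx
  · rw [bump, hσ0 _ (by linarith), hσ0 _ (by linarith), sub_zero]
  · rw [bump, hσ1 _ (by linarith), hσ1 _ (by linarith), sub_self]

lemma bump_add_bump_sub_two_mul (hσ1 : ∀ x, m ≤ x → σ x = 1)
    (hσ0 : ∀ x, x ≤ -m → σ x = 0) {x : ℝ} (hx : x ∈ Icc 0 (2 * m)) :
    bump σ m x + bump σ m (x - 2 * m) = 1 := by
  have htop : σ (x + m) = 1 := hσ1 _ (by linarith [hx.1])
  have hbot : σ (x - 2 * m - m) = 0 := hσ0 _ (by linarith [hx.2])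
  rw [bump, bump, htop, hbot, show x - 2 * m + m = x - m by ring]
  ring

lemma bump_rescale_eq_zero (hm : 0 ≤ m) (hσ1 : ∀ x, m ≤ x → σ x = 1)
    (hσ0 : ∀ x, x ≤ -m → σ x = 0) {h y : ℝ} (hh : 0 < h) (hy : h ≤ |y|) :
    bump σ m (2 * m / h * y) = 0 := by
  refine bump_eq_zero_of_two_mul_le_abs hm hσ1 hσ0 ?_
  rw [abs_mul, abs_of_nonneg (by positivity : 0 ≤ 2 * m / h)]
  calc 2 * m = 2 * m / h * h := by field_simp
    _ ≤ 2 * m / h * |y| := by gcongr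

lemma bump_rescale_add_bump_rescale_sub (hm : 0 ≤ m) (hσ1 : ∀ x, m ≤ x → σ x = 1)
    (hσ0 : ∀ x, x ≤ -m → σ x = 0) {h y : ℝ} (hh : 0 < h) (hy : y ∈ Icc 0 h) :
    bump σ m (2 * m / h * y) + bump σ m (2 * m / h * (y - h)) = 1 := by
  have hshift : 2 * m / h * (y - h) = 2 * m / h * y - 2 * m := by field_simp
  refine hshift ▸ bump_add_bump_sub_two_mul hσ1 hσ0 ⟨by have := hy.1; positivity, ?_⟩
  calc 2 * m / h * y ≤ 2 * m / h * h := by gcongr; exact hy.2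
    _ = 2 * m := by field_simp

end bump

lemma exists_mem_Icc_grid_cell {a h x : ℝ} {n : ℕ} (hn : 0 < n) (hx : x ∈ Icc a (a + n * h)) :
    ∃ k < n, x ∈ Icc (a + k * h) (a + (k + 1) * h) := by
  induction n, hn using Nat.le_induction with
  | base => exact ⟨0, one_pos, by simpa using hx⟩
  | succ n hn ih =>
    by_cases hxn : x ≤ a + n * h
    · obtain ⟨k, hk, hxk⟩ := ih ⟨hx.1, hxn⟩
      exact ⟨k, hk.trans n.lt_succ_self, hxk⟩
    · exact ⟨n, n.lt_succ_self, (not_le.1 hxn).le, by exact_mod_cast hx.2⟩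

lemma sum_range_grid_eq_of_mem_cell {f φ : ℝ → ℝ} {a h x : ℝ} {n k : ℕ} (hk : k < n)
    (hφ_zero : ∀ y, h ≤ |y| → φ y = 0) (hx : x ∈ Icc (a + k * h) (a + (k + 1) * h)) :
    ∑ j ∈ range (n + 1), f (a + j * h) * φ (x - (a + j * h)) =
      f (a + k * h) * φ (x - (a + k * h)) +
        f (a + (k + 1 : ℕ) * h) * φ (x - (a + (k + 1 : ℕ) * h)) := by
  obtain ⟨hxk, hxk'⟩ := hx
  have hh : 0 ≤ h := by linarith
  refine sum_eq_add_of_mem k (k + 1) (mem_range.2 (by omega)) (mem_range.2 (by omega))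
    (by omega) ?_
  rintro j - ⟨hjk, hjk'⟩
  rw [hφ_zero _ ?_, mul_zero]
  rcases lt_or_gt_of_ne hjk with hj | hj
  · have hj : (j : ℝ) + 1 ≤ k := by exact_mod_cast hj
    exact le_abs.2 (Or.inl (by nlinarith))
  · have hj : (k : ℝ) + 2 ≤ j := by exact_mod_cast (show k + 2 ≤ j by omega)
    exact le_abs.2 (Or.inr (by nlinarith))

lemma abs_sub_sum_range_grid_le_modulus {f φ : ℝ → ℝ} {a b h x : ℝ} {n : ℕ} (hn : 0 < n)
    (hb : b = a + n * h) (hf : ContinuousOn f (Icc a b)) (hφ_nonneg : ∀ y, 0 ≤ φ y)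
    (hφ_zero : ∀ y, h ≤ |y| → φ y = 0) (hφ_one : ∀ y ∈ Icc 0 h, φ y + φ (y - h) = 1)
    (hx : x ∈ Icc a b) :
    |f x - ∑ k ∈ range (n + 1), f (a + k * h) * φ (x - (a + k * h))| ≤ modulus f a b h := by
  subst hb
  obtain ⟨k, hk, hxk⟩ := exists_mem_Icc_grid_cell hn hx
  have hh : 0 ≤ h := by linarith [hxk.1, hxk.2]
  have hnode : ∀ j ≤ n, a + j * h ∈ Icc a (a + n * h) := fun j hj =>
    ⟨by nlinarith [j.cast_nonneg (α := ℝ)], by nlinarith [(Nat.cast_le (α := ℝ)).2 hj]⟩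
  have hshift : x - (a + (k + 1 : ℕ) * h) = x - (a + k * h) - h := by push_cast; ring
  rw [sum_range_grid_eq_of_mem_cell hk hφ_zero hxk, hshift]
  refine abs_sub_add_mul_le (hφ_nonneg _) (hφ_nonneg _) (hφ_one _ ⟨?_, ?_⟩)
    (abs_sub_le_modulus hf hx (hnode k hk.le) (abs_le.2 ⟨?_, ?_⟩))
    (abs_sub_le_modulus hf hx (hnode (k + 1) hk) (abs_le.2 ⟨?_, ?_⟩)) <;>
  push_cast <;> linarith [hxk.1, hxk.2]

/-- Approximation error of the neural network operator:
`‖f - S_{n,σ}(f,·)‖∞ ≤ ω(f, (b-a)/n)`. -/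
theorem stmt_9 (m : ℝ) (hm : 0 < m) (σ : ℝ → ℝ) (hσ : Monotone σ)
    (hσ1 : ∀ x : ℝ, m ≤ x → σ x = 1) (hσ0 : ∀ x : ℝ, x ≤ -m → σ x = 0)
    (ξ : ℝ → ℝ) (hξ : ∀ x : ℝ, ξ x = σ (x + m) - σ (x - m))
    (a b : ℝ) (hab : a < b) (n : ℕ) (hn : 0 < n)
    (f : ℝ → ℝ) (hf : ContinuousOn f (Set.Icc a b)) :
    ∀ x ∈ Set.Icc a b,
      |f x - ∑ k ∈ Finset.range (n + 1),
          f (a + k * ((b - a) / n)) * ξ (2 * m / ((b - a) / n) * (x - (a + k * ((b - a) / n))))|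
        ≤ modulus f a b ((b - a) / n) := by
  intro x hx
  obtain rfl : ξ = bump σ m := funext hξ
  have hh : 0 < (b - a) / n := div_pos (sub_pos.2 hab) (Nat.cast_pos.2 hn)
  refine abs_sub_sum_range_grid_le_modulus (φ := fun y => bump σ m (2 * m / ((b - a) / n) * y)) hn
    ?_ hf (fun y => bump_nonneg hσ hm.le _)
    (fun y => bump_rescale_eq_zero hm.le hσ1 hσ0 hh)
    (fun y => bump_rescale_add_bump_rescale_sub hm.le hσ1 hσ0 hh) hx
  rw [mul_div_cancel₀ _ (Nat.cast_ne_zero.2 hn.ne')]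
  ring
end
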